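/- Let n ≥ 1 and let Γ_n = ℤ^n ≀ ℤ be the torsion-free lamplighter group. For every finite group Q and every surjective homomorphism f : Γ_n → Q, there exist an integer m > 2, a surjective homomorphism g : Γ_n → Γ(m), and a homomorphism h : Γ(m) → Q such that f = h ∘ g. In particular, the finite quotients Γ(m) form a cofinal family among the finite quotients of Γ_n. -/

import Mathlib

open LaurentPolynomial

/-- The base group of the torsion-free lamplighter group: the (additive group of the)
free module of rank `n` over the Laurent polynomial ring `ℤ[T,T⁻¹]`. -/
abbrev LampBase (n : ℕ) : Type := Fin n → LaurentPolynomial ℤ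

/-- The shift automorphism of the base: multiplication by `T^z` in each coordinate. -/
noncomputable def lampShift (n : ℕ) (z : ℤ) : LampBase n ≃+ LampBase n where
  toFun v := fun i => T z * v i
  invFun v := fun i => T (-z) * v i
  left_inv v := by funext i; simp [← mul_assoc, ← T_add]
  right_inv v := by funext i; simp [← mul_assoc, ← T_add]
  map_add' v w := by funext i; simp [mul_add]

/-- The action of `ℤ` on the base group, where `1` acts by multiplication by `T`
in each coordinate. -/
noncomputable def lampAction (n : ℕ) :
    Multiplicative ℤ →* MulAut (Multiplicative (LampBase n)) where
  toFun z := AddEquiv.toMultiplicative (lampShift n z.toAdd)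
  map_one' := by
    refine MulEquiv.ext fun v => ?_
    show Multiplicative.ofAdd ((lampShift n (1 : Multiplicative ℤ).toAdd) v.toAdd) = v
    simp [lampShift]
  map_mul' z w := by
    refine MulEquiv.ext fun v => ?_
    show Multiplicative.ofAdd ((lampShift n (z * w).toAdd) v.toAdd)
        = Multiplicative.ofAdd ((lampShift n z.toAdd)
            (Multiplicative.ofAdd ((lampShift n w.toAdd) v.toAdd)).toAdd)
    simp only [toAdd_mul, toAdd_ofAdd, lampShift, AddEquiv.coe_mk, Equiv.coe_fn_mk]
    congr 1
    funext i
    rw [T_add, mul_assoc]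

/-- The torsion-free lamplighter group `ℤ^n ≀ ℤ`, realized as the semidirect product
of the free `ℤ[T,T⁻¹]`-module of rank `n` by `ℤ`, where `1 ∈ ℤ` acts by multiplication
by `T` in each coordinate. -/
abbrev Lamplighter (n : ℕ) : Type :=
  SemidirectProduct (Multiplicative (LampBase n)) (Multiplicative ℤ) (lampAction n)

/-- Two groups have the same finite quotients if every finite group is a quotient of one
iff it is a quotient of the other. -/
def SameFiniteQuotients (G H : Type*) [Group G] [Group H] : Prop :=
  ∀ (Q : Type) (_ : Group Q) (_ : Finite Q),
    (∃ f : G →* Q, Function.Surjective f) ↔ (∃ f : H →* Q, Function.Surjective f)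

/-- A group is residually finite if every nontrivial element is detected by a homomorphism
to some finite group. -/
def ResiduallyFinite (G : Type*) [Group G] : Prop :=
  ∀ g : G, g ≠ 1 → ∃ (Q : Type) (_ : Group Q) (_ : Finite Q) (f : G →* Q), f g ≠ 1

/-- The ring `R_m = (ℤ/mℤ)[X]/(X^m − 1)`. -/
abbrev Rm (m : ℕ) : Type :=
  Polynomial (ZMod m) ⧸ Ideal.span {(Polynomial.X : Polynomial (ZMod m)) ^ m - 1}

/-- The image of `X` in `R_m`, as a unit. -/
noncomputable def RmX (m : ℕ) [NeZero m] : (Rm m)ˣ where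
  val := Ideal.Quotient.mk _ Polynomial.X
  inv := Ideal.Quotient.mk _ (Polynomial.X ^ (m - 1))
  val_inv := by
    have h : (Polynomial.X : Polynomial (ZMod m)) * Polynomial.X ^ (m - 1) =
        Polynomial.X ^ m - 1 + 1 := by
      rw [← pow_succ']
      rw [show m - 1 + 1 = m from by have := NeZero.pos m; omega]
      ring
    have h2 : Ideal.Quotient.mk (Ideal.span {(Polynomial.X : Polynomial (ZMod m)) ^ m - 1})
        ((Polynomial.X : Polynomial (ZMod m)) ^ m - 1) = 0 :=
      Ideal.Quotient.eq_zero_iff_mem.mpr (Ideal.subset_span rfl)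
    rw [← map_mul, h, map_add, map_one, h2, zero_add]
  inv_val := by
    have h : (Polynomial.X : Polynomial (ZMod m)) ^ (m - 1) * Polynomial.X =
        Polynomial.X ^ m - 1 + 1 := by
      rw [← pow_succ]
      rw [show m - 1 + 1 = m from by have := NeZero.pos m; omega]
      ring
    have h2 : Ideal.Quotient.mk (Ideal.span {(Polynomial.X : Polynomial (ZMod m)) ^ m - 1})
        ((Polynomial.X : Polynomial (ZMod m)) ^ m - 1) = 0 :=
      Ideal.Quotient.eq_zero_iff_mem.mpr (Ideal.subset_span rfl)
    rw [← map_mul, h, map_add, map_one, h2, zero_add]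

lemma RmX_pow_eq_one (m : ℕ) [NeZero m] : RmX m ^ m = 1 := by
  ext
  push_cast [RmX]
  rw [← map_pow, ← map_one (Ideal.Quotient.mk _), Ideal.Quotient.mk_eq_mk_iff_sub_mem]
  exact Ideal.subset_span rfl

/-- The homomorphism from the cyclic group `C_m = ZMod m` (written multiplicatively)
to a group `G`, sending the generator `1` to a given element `g` satisfying `g ^ m = 1`. -/
def zmodPowHom {G : Type*} [Group G] (m : ℕ) [NeZero m] (g : G) (hg : g ^ m = 1) :
    Multiplicative (ZMod m) →* G where
  toFun k := g ^ (Multiplicative.toAdd k).val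
  map_one' := by
    show g ^ (0 : ZMod m).val = 1
    simp
  map_mul' a b := by
    show g ^ (a.toAdd + b.toAdd).val = g ^ a.toAdd.val * g ^ b.toAdd.val
    rw [ZMod.val_add, ← pow_eq_pow_mod _ hg, pow_add]

/-- The canonical homomorphism `AddAut A →* MulAut (Multiplicative A)`. -/
def addAutToMulAut (A : Type*) [AddGroup A] :
    Multiplicative (AddAut A) →* MulAut (Multiplicative A) where
  toFun e := AddEquiv.toMultiplicative e.toAdd
  map_one' := rfl
  map_mul' _ _ := rfl

/-- The action of `C_m` on `(R_m)^n` in which the generator of `C_m` acts on each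
coordinate by multiplication by `X`. -/
noncomputable def finLampAction (n m : ℕ) [NeZero m] :
    Multiplicative (ZMod m) →* MulAut (Multiplicative (Fin n → Rm m)) :=
  ((addAutToMulAut (Fin n → Rm m)).comp
    (DistribMulAction.toAddAut (Rm m)ˣ (Fin n → Rm m))).comp
      (zmodPowHom m (RmX m) (RmX_pow_eq_one m))

/-- The finite lamplighter group `Γ(m) = C_m^n ≀ C_m = (R_m)^n ⋊ C_m`, where the
generator of `C_m` acts on each coordinate of `(R_m)^n` by multiplication by `X`. -/
abbrev FinLamplighter (n m : ℕ) [NeZero m] : Type :=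
  SemidirectProduct (Multiplicative (Fin n → Rm m)) (Multiplicative (ZMod m))
    (finLampAction n m)


/-!
Reducing the base `ℤ[T,T⁻¹]^n` modulo the ideal `(m, T^m - 1)` and the top `ℤ` modulo `m` gives
a surjection `Γ_n → Γ(m)`. An element of its kernel is a product of an `m`-th power of a base
element, a commutator `t^m b t^{-m} b⁻¹`, and a power of `t^m`. When `|Q|` divides `m`, all
`m`-th powers die in `Q`; in particular `t^m` does, so conjugation by `t^m` is trivial in `Q` and
the commutators die too. Hence any `f : Γ_n → Q` factors through `Γ(m)` for `m = 3 |Q|`.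
-/

lemma pow_zmod_val_intCast {G : Type*} [Group G] {m : ℕ} [NeZero m] {g : G}
    (hg : g ^ m = 1) (z : ℤ) : g ^ (z : ZMod m).val = g ^ z := by
  rw [← zpow_natCast, ZMod.val_intCast, ← zpow_eq_zpow_emod' z hg]

lemma map_ofAdd_natCast_mul_eq_one {Q : Type*} [Monoid Q] {m : ℕ} (hQ : ∀ x : Q, x ^ m = 1)
    (f : Multiplicative ℤ →* Q) (k : ℤ) : f (.ofAdd (m * k)) = 1 := by
  rw [← nsmul_eq_mul, ofAdd_nsmul, map_pow, hQ]

lemma SemidirectProduct.map_inl_aut_of_map_inr_eq_one {N G Q : Type*} [Group N] [Group G]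
    [Group Q] {φ : G →* MulAut N} (f : N ⋊[φ] G →* Q) {g : G} (hg : f (inr g) = 1) (x : N) :
    f (inl (φ g x)) = f (inl x) := by
  simp [inl_aut, hg]

section Reduction

variable (m : ℕ)

noncomputable def polynomialToRm : Polynomial ℤ →+* Rm m :=
  (Ideal.Quotient.mk _).comp (Polynomial.mapRingHom (Int.castRingHom (ZMod m)))

lemma polynomialToRm_surjective : Function.Surjective (polynomialToRm m) :=
  Ideal.Quotient.mk_surjective.comp (Polynomial.map_surjective _ ZMod.intCast_surjective)

lemma ker_polynomialToRm :
    RingHom.ker (polynomialToRm m) = Ideal.span {Polynomial.C (m : ℤ), Polynomial.X ^ m - 1} := by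
  have hsurj : Function.Surjective (Polynomial.mapRingHom (Int.castRingHom (ZMod m))) :=
    Polynomial.map_surjective _ ZMod.intCast_surjective
  have hspan : Ideal.span {(Polynomial.X : Polynomial (ZMod m)) ^ m - 1} =
      (Ideal.span {(Polynomial.X : Polynomial ℤ) ^ m - 1}).map
        (Polynomial.mapRingHom (Int.castRingHom (ZMod m))) := by
    simp [Ideal.map_span]
  rw [polynomialToRm, ← RingHom.comap_ker, Ideal.mk_ker, hspan,
    Ideal.comap_map_of_surjective' _ hsurj, Polynomial.ker_mapRingHom, ZMod.ker_intCastRingHom,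
    Ideal.map_span, Set.image_singleton, Set.pair_comm, Ideal.span_insert, sup_comm]

def intReduce : Multiplicative ℤ →* Multiplicative (ZMod m) :=
  (Int.castAddHom (ZMod m)).toMultiplicative

lemma intReduce_apply (z : Multiplicative ℤ) : (intReduce m z).toAdd = (z.toAdd : ZMod m) := rfl

variable [NeZero m]

noncomputable def laurentToRm : LaurentPolynomial ℤ →+* Rm m :=
  LaurentPolynomial.eval₂ (Int.castRingHom (Rm m)) (RmX m)

lemma laurentToRm_T (z : ℤ) : laurentToRm m (T z) = ↑(RmX m ^ z) :=
  LaurentPolynomial.eval₂_T _ _ z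

lemma laurentToRm_comp_toLaurent :
    (laurentToRm m).comp Polynomial.toLaurent = polynomialToRm m := by
  refine Polynomial.ringHom_ext' (RingHom.ext_int _ _) ?_
  simp [laurentToRm, polynomialToRm, RmX]

lemma laurentToRm_surjective : Function.Surjective (laurentToRm m) := by
  have hsurj : Function.Surjective ((laurentToRm m).comp Polynomial.toLaurent) := by
    rw [laurentToRm_comp_toLaurent]
    exact polynomialToRm_surjective m
  exact Function.Surjective.of_comp (g := Polynomial.toLaurent) hsurj

lemma ker_laurentToRm_le :
    RingHom.ker (laurentToRm m) ≤ Ideal.span {(m : LaurentPolynomial ℤ), T m - 1} := by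
  intro p hp
  obtain ⟨N, P, hP⟩ := p.exists_T_pow
  have hPker : P ∈ RingHom.ker (polynomialToRm m) := by
    rw [← laurentToRm_comp_toLaurent, RingHom.mem_ker, RingHom.comp_apply, hP, map_mul,
      RingHom.mem_ker.mp hp, zero_mul]
  rw [ker_polynomialToRm] at hPker
  have hPmem := Ideal.mem_map_of_mem Polynomial.toLaurent hPker
  rw [Ideal.map_span, Set.image_pair] at hPmem
  simp only [map_natCast, map_sub, Polynomial.toLaurent_X_pow, Polynomial.toLaurent_one]
    at hPmem
  have hp' : p = Polynomial.toLaurent P * T (-(N : ℤ)) := by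
    rw [hP, mul_assoc, ← T_add, add_neg_cancel, T_zero, mul_one]
  rw [hp']
  exact Ideal.mul_mem_right _ _ hPmem

variable (n : ℕ)

noncomputable def lampBaseReduce : Multiplicative (LampBase n) →* Multiplicative (Fin n → Rm m) :=
  ((laurentToRm m).toAddMonoidHom.compLeft (Fin n)).toMultiplicative

lemma lampBaseReduce_apply (v : Multiplicative (LampBase n)) (i : Fin n) :
    (lampBaseReduce m n v).toAdd i = laurentToRm m (v.toAdd i) := rfl

lemma lampAction_apply_toAdd (z : Multiplicative ℤ) (v : Multiplicative (LampBase n))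
    (i : Fin n) : ((lampAction n z) v).toAdd i = T z.toAdd * v.toAdd i := rfl

lemma finLampAction_apply_toAdd (c : Multiplicative (ZMod m))
    (v : Multiplicative (Fin n → Rm m)) (i : Fin n) :
    ((finLampAction n m c) v).toAdd i = ↑(RmX m ^ c.toAdd.val) * v.toAdd i := rfl

lemma lampBaseReduce_comp_lampAction (z : Multiplicative ℤ) :
    (lampBaseReduce m n).comp (lampAction n z).toMonoidHom =
      ((finLampAction n m) (intReduce m z)).toMonoidHom.comp (lampBaseReduce m n) := by
  refine MonoidHom.ext fun v => Multiplicative.toAdd.injective (funext fun i => ?_)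
  rw [MonoidHom.comp_apply, MonoidHom.comp_apply, MulEquiv.coe_toMonoidHom,
    MulEquiv.coe_toMonoidHom, finLampAction_apply_toAdd, lampBaseReduce_apply,
    lampBaseReduce_apply, lampAction_apply_toAdd, intReduce_apply, map_mul, laurentToRm_T,
    pow_zmod_val_intCast (RmX_pow_eq_one m)]

noncomputable def lampReduce : Lamplighter n →* FinLamplighter n m :=
  SemidirectProduct.map (lampBaseReduce m n) (intReduce m) (lampBaseReduce_comp_lampAction m n)

lemma lampReduce_surjective : Function.Surjective (lampReduce m n) := by
  rintro ⟨v, c⟩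
  choose w hw using fun i => laurentToRm_surjective m (v.toAdd i)
  obtain ⟨z, hz⟩ := ZMod.intCast_surjective c.toAdd
  exact ⟨⟨.ofAdd w, .ofAdd z⟩, SemidirectProduct.ext (Multiplicative.toAdd.injective (funext hw))
    (Multiplicative.toAdd.injective hz)⟩

variable {m n} {Q : Type*} [Group Q]

lemma map_inl_eq_one_of_lampBaseReduce_eq_one (hQ : ∀ x : Q, x ^ m = 1)
    (f : Lamplighter n →* Q) {w : Multiplicative (LampBase n)}
    (hw : lampBaseReduce m n w = 1) : f (SemidirectProduct.inl w) = 1 := by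
  have hmem (i : Fin n) : w.toAdd i ∈ Ideal.span {(m : LaurentPolynomial ℤ), T m - 1} :=
    ker_laurentToRm_le m (congrFun (congrArg Multiplicative.toAdd hw) i)
  choose u v huv using fun i => Ideal.mem_span_pair.mp (hmem i)
  have hdecomp : w = .ofAdd (m • u) * (lampAction n (.ofAdd m) (.ofAdd v) * (.ofAdd v)⁻¹) := by
    refine Multiplicative.toAdd.injective (funext fun i => ?_)
    simp only [nsmul_eq_mul, toAdd_mul, toAdd_ofAdd, toAdd_inv, Pi.add_apply, Pi.mul_apply,
      Pi.natCast_apply, lampAction_apply_toAdd, Pi.neg_apply]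
    linear_combination (huv i).symm
  have hinr : f (SemidirectProduct.inr (.ofAdd m)) = 1 := by
    simpa using map_ofAdd_natCast_mul_eq_one hQ (f.comp SemidirectProduct.inr) 1
  simp only [hdecomp, map_mul, map_inv]
  rw [SemidirectProduct.map_inl_aut_of_map_inr_eq_one f hinr, mul_inv_cancel, mul_one,
    ofAdd_nsmul, map_pow, map_pow, hQ]

lemma ker_lampReduce_le (hQ : ∀ x : Q, x ^ m = 1) (f : Lamplighter n →* Q) :
    (lampReduce m n).ker ≤ f.ker := by
  intro x hx
  rw [MonoidHom.mem_ker] at hx ⊢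
  have hright : ((x.right.toAdd : ℤ) : ZMod m) = 0 := congrArg (fun y => y.right.toAdd) hx
  obtain ⟨k, hk⟩ := (ZMod.intCast_zmod_eq_zero_iff_dvd _ _).mp hright
  rw [← SemidirectProduct.inl_left_mul_inr_right x, map_mul,
    map_inl_eq_one_of_lampBaseReduce_eq_one hQ f (congrArg SemidirectProduct.left hx), one_mul,
    ← ofAdd_toAdd x.right, hk]
  exact map_ofAdd_natCast_mul_eq_one hQ (f.comp SemidirectProduct.inr) k

end Reduction

/-- The finite lamplighter quotients `Γ(m)` are cofinal among the finite quotients of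
the torsion-free lamplighter group `Γ_n = ℤ^n ≀ ℤ`: every surjection from `Γ_n` onto a
finite group `Q` factors through a surjection onto some `Γ(m)` with `m > 2`. -/
theorem finLamplighter_quotients_cofinal (n : ℕ)
    (Q : Type) [Group Q] [Finite Q]
    (f : Lamplighter n →* Q) :
    ∃ (m : ℕ) (hm : 2 < m),
      haveI : NeZero m := ⟨by omega⟩
      ∃ (g : Lamplighter n →* FinLamplighter n m) (h : FinLamplighter n m →* Q),
        Function.Surjective g ∧ f = h.comp g := by
  have hcard : 0 < Nat.card Q := Nat.card_pos
  refine ⟨3 * Nat.card Q, by omega, ?_⟩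
  have hQ (x : Q) : x ^ (3 * Nat.card Q) = 1 := by
    rw [mul_comm, pow_mul, pow_card_eq_one', one_pow]
  have hsurj := lampReduce_surjective (3 * Nat.card Q) n
  exact ⟨_, (lampReduce _ n).liftOfSurjective hsurj ⟨f, ker_lampReduce_le hQ f⟩, hsurj,
    (MonoidHom.liftOfRightInverse_comp (lampReduce _ n) _ _ ⟨f, ker_lampReduce_le hQ f⟩).symm⟩
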